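/- arXiv:2101.08205 — 3 statements merged into one kernel-verified Lean document; each statement's English description precedes it below -/
import Mathlib

section
/- For a module decomposition with independent components, the Birnbaum importance of component i ∈ M in the composed system equals the product of the Birnbaum importance of the module within the system and the Birnbaum importance of i within the module: ∂H/∂p_i = ∂h_Ψ/∂p_M · ∂h_χ/∂p_i, where H(p) = h_Ψ(h_χ(p^M), p^{M^C}). -/
/-!
A reliability polynomial is multilinear, so along any single coordinate it is affine and its
derivative there is the difference of its values at reliability `1` and `0` (the Birnbaum
importance). The theorem is then the chain rule for the composite of two such affine maps.
-/

open Finset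

def bval (b : Bool) : ℝ := if b then 1 else 0

/-- Reliability polynomial of the module structure `χ`. -/
def relChi {α : Type*} [Fintype α] [DecidableEq α] (χ : (α → Bool) → Bool)
    (p : α → ℝ) : ℝ :=
  ∑ x : α → Bool, bval (χ x) * ∏ a, if x a then p a else 1 - p a

/-- Reliability polynomial of the organizing structure `Ψ` in the module
reliability `q` and the reliabilities of the remaining components. -/
def relPsi {β : Type*} [Fintype β] [DecidableEq β] (Ψ : Bool → (β → Bool) → Bool)
    (q : ℝ) (p : β → ℝ) : ℝ :=
  ∑ b : Bool, ∑ y : β → Bool,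
    bval (Ψ b y) * (if b then q else 1 - q) * ∏ j, if y j then p j else 1 - p j

theorem hasDerivAt_of_eq_add_mul_sub {f : ℝ → ℝ} (hf : ∀ t, f t = f 0 + t * (f 1 - f 0))
    (x : ℝ) : HasDerivAt f (f 1 - f 0) x := by
  have hline : HasDerivAt (fun t => f 0 + t * (f 1 - f 0)) (f 1 - f 0) x := by
    simpa using (hasDerivAt_mul_const (f 1 - f 0)).const_add (f 0)
  exact hline.congr_of_eventuallyEq (Filter.Eventually.of_forall hf)

theorem prod_apply_update_eq_mul_prod_erase {ι R M : Type*} [Fintype ι] [DecidableEq ι]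
    [CommMonoid M] (g : ι → R → M) (p : ι → R) (i : ι) (t : R) :
    ∏ a, g a (Function.update p i t a) = g i t * ∏ a ∈ univ.erase i, g a (p a) := by
  simp_rw [Function.apply_update g]
  rw [prod_update_of_mem (mem_univ i), sdiff_singleton_eq_erase]

theorem relChi_update_eq_add_mul_sub {α : Type*} [Fintype α] [DecidableEq α]
    (χ : (α → Bool) → Bool) (p : α → ℝ) (i : α) (t : ℝ) :
    relChi χ (Function.update p i t) = relChi χ (Function.update p i 0) +
      t * (relChi χ (Function.update p i 1) - relChi χ (Function.update p i 0)) := by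
  have hfactor : ∀ (s : ℝ) (x : α → Bool),
      (∏ a, if x a then Function.update p i s a else 1 - Function.update p i s a) =
        (if x i then s else 1 - s) * ∏ a ∈ univ.erase i, if x a then p a else 1 - p a :=
    fun s x => prod_apply_update_eq_mul_prod_erase (fun a s => if x a then s else 1 - s) p i s
  simp only [relChi, hfactor, mul_sum, ← sum_sub_distrib, ← sum_add_distrib]
  refine sum_congr rfl fun x _ => ?_
  cases x i <;> simp only [Bool.false_eq_true, if_true, if_false] <;> ring

theorem relPsi_eq_add_mul_sub {β : Type*} [Fintype β] [DecidableEq β]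
    (Ψ : Bool → (β → Bool) → Bool) (q : ℝ) (p : β → ℝ) :
    relPsi Ψ q p = relPsi Ψ 0 p + q * (relPsi Ψ 1 p - relPsi Ψ 0 p) := by
  simp only [relPsi, mul_sum, ← sum_sub_distrib, ← sum_add_distrib]
  refine sum_congr rfl fun b _ => sum_congr rfl fun y _ => ?_
  cases b <;> simp only [Bool.false_eq_true, if_true, if_false] <;> ring

theorem hasDerivAt_relChi_update {α : Type*} [Fintype α] [DecidableEq α]
    (χ : (α → Bool) → Bool) (p : α → ℝ) (i : α) (x : ℝ) :
    HasDerivAt (fun t => relChi χ (Function.update p i t))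
      (relChi χ (Function.update p i 1) - relChi χ (Function.update p i 0)) x :=
  hasDerivAt_of_eq_add_mul_sub (relChi_update_eq_add_mul_sub χ p i) x

theorem hasDerivAt_relPsi {β : Type*} [Fintype β] [DecidableEq β]
    (Ψ : Bool → (β → Bool) → Bool) (p : β → ℝ) (q : ℝ) :
    HasDerivAt (fun q => relPsi Ψ q p) (relPsi Ψ 1 p - relPsi Ψ 0 p) q :=
  hasDerivAt_of_eq_add_mul_sub (fun q => relPsi_eq_add_mul_sub Ψ q p) q

/-- Birnbaum importance of a module component in the composed system equals the
importance of the module for the system times the importance of the component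
within the module: `∂H/∂p_i = ∂h_Ψ/∂q · ∂h_χ/∂p_i`. -/
theorem module_birnbaum_chain_rule {α β : Type*} [Fintype α] [DecidableEq α]
    [Fintype β] [DecidableEq β]
    (χ : (α → Bool) → Bool) (Ψ : Bool → (β → Bool) → Bool)
    (pα : α → ℝ) (pβ : β → ℝ) (i : α) :
    HasDerivAt (fun t : ℝ => relPsi Ψ (relChi χ (Function.update pα i t)) pβ)
      ((relPsi Ψ 1 pβ - relPsi Ψ 0 pβ)
        * (relChi χ (Function.update pα i 1) - relChi χ (Function.update pα i 0)))
      (pα i) :=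
  (hasDerivAt_relPsi Ψ pβ _).comp (pα i) (hasDerivAt_relChi_update χ pα i (pα i))
end

section
/- The Barlow–Proschan structural importance admits the combinatorial formula I_φ(i) = ∫_0^1 [h(1_i, p·1) − h(0_i, p·1)] dp = Σ_{r=1}^n n_r(i) · (n−r)!(r−1)!/n!, where n_r(i) is the number of vectors x with Σ_{j≠i} x_j = r−1 and φ(1_i,x) − φ(0_i,x) = 1. -/
open Finset intervalIntegral

/-- Multilinear reliability polynomial of `φ`. -/
def rel {n : ℕ} (φ : (Fin n → Bool) → Bool) (p : Fin n → ℝ) : ℝ :=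
  ∑ x : Fin n → Bool, bval (φ x) * ∏ j, if x j then p j else 1 - p j

/-- Number of critical path vectors of size `r` for component `i`:
vectors `x` with `∑_{j≠i} x_j = r − 1` and `φ(1_i,x) − φ(0_i,x) = 1`,
counted over the states of the components other than `i` (i.e. with `x_i`
fixed to `false`). -/
def numCrit {n : ℕ} (φ : (Fin n → Bool) → Bool) (i : Fin n) (r : ℕ) : ℕ :=
  (Finset.univ.filter (fun x : Fin n → Bool =>
      x i = false ∧
      (∑ j ∈ Finset.univ.erase i, if x j then 1 else 0) = r - 1 ∧
      φ (Function.update x i true) = true ∧ φ (Function.update x i false) = false)).card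

/-!
Conditioning on component `i`, the reliability polynomial splits over the states `y` of the other
components, so `h(1_i, p·1) − h(0_i, p·1) = Σ_y [φ(1_i,y) − φ(0_i,y)] p^k (1−p)^(n−1−k)` with
`k = Σ_{j≠i} y_j`. Each monomial integrates to the Beta value `k! (n−1−k)! / n!`, and by monotonicity
the bracket is the indicator that `y` is critical for `i`; grouping the `y` by `r = k + 1` gives
the counts `n_r(i)`.
-/

open Function

theorem integral_pow_mul_one_sub_pow (a b : ℕ) :
    ∫ p in (0:ℝ)..1, p ^ a * (1 - p) ^ b
      = (a.factorial * b.factorial : ℝ) / (a + b + 1).factorial := by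
  have hB : Complex.betaIntegral (a + 1) (b + 1) = ↑(∫ p in (0:ℝ)..1, p ^ a * (1 - p) ^ b) := by
    rw [Complex.betaIntegral, ← intervalIntegral.integral_ofReal]
    congr 1 with p
    push_cast
    simp [Complex.cpow_natCast]
  have hΓ := Complex.Gamma_mul_Gamma_eq_betaIntegral (s := a + 1) (t := b + 1)
    (by simp; positivity) (by simp; positivity)
  rw [hB, show (a + 1 + (b + 1) : ℂ) = ↑(a + b + 1 : ℕ) + 1 by push_cast; ring,
    Complex.Gamma_nat_eq_factorial, Complex.Gamma_nat_eq_factorial,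
    Complex.Gamma_nat_eq_factorial] at hΓ
  rw [eq_div_iff (by positivity), mul_comm]
  exact_mod_cast hΓ.symm

theorem Finset.prod_ite_eq_pow_mul_pow {ι M : Type*} [CommMonoid M] (s : Finset ι)
    (P : ι → Prop) [DecidablePred P] (a b : M) :
    ∏ j ∈ s, (if P j then a else b) = a ^ #{j ∈ s | P j} * b ^ (#s - #{j ∈ s | P j}) := by
  rw [prod_ite, prod_const, prod_const,
    eq_tsub_of_add_eq ((add_comm _ _).trans (card_filter_add_card_filter_not (s := s) P))]

theorem Finset.sum_filter_apply_eq_sum_update {ι β M : Type*} [Fintype ι] [DecidableEq ι]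
    [Fintype β] [DecidableEq β] [AddCommMonoid M] (f : (ι → β) → M) (i : ι) (b c : β) :
    ∑ x with x i = b, f x = ∑ y with y i = c, f (update y i b) :=
  sum_nbij' (update · i c) (update · i b) (by simp) (by simp)
    (fun x hx => by rw [update_idem, ← (mem_filter.1 hx).2, update_eq_self])
    (fun y hy => by rw [update_idem, ← (mem_filter.1 hy).2, update_eq_self])
    (fun x hx => by rw [update_idem, ← (mem_filter.1 hx).2, update_eq_self])

theorem bval_sub_bval_of_le {a b : Bool} (h : b ≤ a) :
    bval a - bval b = if a = true ∧ b = false then 1 else 0 := by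
  cases a <;> cases b <;> simp_all [bval]
  exact absurd h (by decide)

section Reliability

variable {n : ℕ}

def sizeOff (i : Fin n) (x : Fin n → Bool) : ℕ :=
  ∑ j ∈ univ.erase i, if x j then 1 else 0

theorem sizeOff_eq_card (i : Fin n) (x : Fin n → Bool) :
    sizeOff i x = #{j ∈ univ.erase i | x j} :=
  (card_filter _ _).symm

theorem sizeOff_le (i : Fin n) (x : Fin n → Bool) : sizeOff i x ≤ n - 1 := by
  simpa [sizeOff_eq_card, card_erase_of_mem] using card_filter_le (univ.erase i) (x ·)

theorem prod_erase_ite_eq (i : Fin n) (x : Fin n → Bool) (p : ℝ) :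
    ∏ j ∈ univ.erase i, (if x j then p else 1 - p)
      = p ^ sizeOff i x * (1 - p) ^ (n - 1 - sizeOff i x) := by
  rw [prod_ite_eq_pow_mul_pow, sizeOff_eq_card, card_erase_of_mem (mem_univ i), card_univ,
    Fintype.card_fin]

theorem rel_update_bval (φ : (Fin n → Bool) → Bool) (q : Fin n → ℝ) (i : Fin n) (b : Bool) :
    rel φ (update q i (bval b))
      = ∑ y with y i = false,
          bval (φ (update y i b)) * ∏ j ∈ univ.erase i, (if y j then q j else 1 - q j) := by
  have hterm (x : Fin n → Bool) :
      bval (φ x) * ∏ j, (if x j then update q i (bval b) j else 1 - update q i (bval b) j)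
        = if x i = b then
            bval (φ x) * ∏ j ∈ univ.erase i, (if x j then q j else 1 - q j) else 0 := by
    rw [← mul_prod_erase univ _ (mem_univ i), update_self,
      prod_congr rfl fun j hj => by rw [update_of_ne (ne_of_mem_erase hj)]]
    cases x i <;> cases b <;> simp [bval]
  rw [rel, sum_congr rfl fun x _ => hterm x, ← sum_filter,
    sum_filter_apply_eq_sum_update _ i b false]
  refine sum_congr rfl fun y _ => ?_
  rw [prod_congr rfl fun j hj => by rw [update_of_ne (ne_of_mem_erase hj)]]

theorem rel_update_one_sub_rel_update_zero (φ : (Fin n → Bool) → Bool) (i : Fin n) (p : ℝ) :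
    rel φ (update (fun _ => p) i 1) - rel φ (update (fun _ => p) i 0)
      = ∑ y with y i = false, (bval (φ (update y i true)) - bval (φ (update y i false)))
          * (p ^ sizeOff i y * (1 - p) ^ (n - 1 - sizeOff i y)) := by
  change rel φ (update _ i (bval true)) - rel φ (update _ i (bval false)) = _
  rw [rel_update_bval, rel_update_bval, ← sum_sub_distrib]
  simp_rw [← sub_mul, prod_erase_ite_eq]

theorem integral_rel_update_one_sub_rel_update_zero (φ : (Fin n → Bool) → Bool) (i : Fin n) :
    ∫ p in (0:ℝ)..1, (rel φ (update (fun _ => p) i 1) - rel φ (update (fun _ => p) i 0))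
      = ∑ y with y i = false, (bval (φ (update y i true)) - bval (φ (update y i false)))
          * ((sizeOff i y).factorial * (n - 1 - sizeOff i y).factorial / n.factorial : ℝ) := by
  simp_rw [rel_update_one_sub_rel_update_zero]
  rw [integral_finsetSum fun y _ => (by fun_prop : Continuous _).intervalIntegrable _ _]
  refine sum_congr rfl fun y _ => ?_
  have hn : sizeOff i y + (n - 1 - sizeOff i y) + 1 = n := by
    have := sizeOff_le i y
    have := i.pos
    omega
  rw [integral_const_mul, integral_pow_mul_one_sub_pow, hn]

theorem sum_bval_sub_mul_eq_sum_numCrit {φ : (Fin n → Bool) → Bool} (hφ : Monotone φ)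
    (i : Fin n) (g : ℕ → ℝ) :
    ∑ y with y i = false, (bval (φ (update y i true)) - bval (φ (update y i false)))
        * g (sizeOff i y)
      = ∑ r ∈ Icc 1 n, numCrit φ i r * g (r - 1) := by
  have hcrit (y : Fin n → Bool) :
      bval (φ (update y i true)) - bval (φ (update y i false))
        = if φ (update y i true) = true ∧ φ (update y i false) = false then 1 else 0 :=
    bval_sub_bval_of_le (hφ (update_le_update_iff'.2 (Bool.false_le _)))
  simp_rw [hcrit, ite_mul, one_mul, zero_mul]
  rw [← sum_filter, filter_filter,
    ← sum_fiberwise_of_maps_to (g := fun y => sizeOff i y + 1) (t := Icc 1 n)]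
  · refine sum_congr rfl fun r hr => ?_
    have hr1 : 1 ≤ r := (mem_Icc.1 hr).1
    rw [sum_congr rfl fun y hy =>
        congrArg g (by have := (mem_filter.1 hy).2; omega : sizeOff i y = r - 1),
      sum_const, nsmul_eq_mul, numCrit, filter_filter]
    congr 3
    refine filter_congr fun y _ => ?_
    unfold sizeOff
    constructor
    · rintro ⟨⟨hyi, hup, hdown⟩, hsize⟩
      exact ⟨hyi, by omega, hup, hdown⟩
    · rintro ⟨hyi, hsize, hup, hdown⟩
      exact ⟨⟨hyi, hup, hdown⟩, by omega⟩
  · intro y _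
    have := sizeOff_le i y
    have := i.pos
    simp only [mem_Icc]
    omega

end Reliability

/-- Barlow–Proschan structural importance:
`∫₀¹ [h(1_i, p·1) − h(0_i, p·1)] dp = Σ_{r=1}^n n_r(i) (n−r)!(r−1)!/n!`. -/
theorem barlow_proschan_structural {n : ℕ} (φ : (Fin n → Bool) → Bool)
    (hmono : ∀ x y : Fin n → Bool, (∀ j, x j ≤ y j) → φ x ≤ φ y) (i : Fin n) :
    ∫ p in (0:ℝ)..1,
        (rel φ (Function.update (fun _ => p) i 1)
          - rel φ (Function.update (fun _ => p) i 0)) =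
      ∑ r ∈ Finset.Icc 1 n,
        (numCrit φ i r : ℝ) * ((Nat.factorial (n - r) * Nat.factorial (r - 1) : ℕ) : ℝ)
          / (Nat.factorial n : ℝ) := by
  rw [integral_rel_update_one_sub_rel_update_zero,
    sum_bval_sub_mul_eq_sum_numCrit (fun x y h => hmono x y h) i
      (fun k => (k.factorial * (n - 1 - k).factorial / n.factorial : ℝ))]
  refine sum_congr rfl fun r hr => ?_
  rw [show n - 1 - (r - 1) = n - r by have := (mem_Icc.1 hr).1; omega]
  push_cast
  ring
end

section
/- If component i is in series with the rest of the system (φ(x) = x_i · ψ(x) for some monotone ψ not depending on x_i), then the Barlow–Proschan importance I_h(i) = ∫_0^∞ h(1_i, Q(t)) dF_i(t) is monotone nondecreasing in each Q_j (j ≠ i) and in F_i, in the sense that pointwise increasing Q_j or F_i (keeping the others fixed) does not decrease I_h(i). -/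
open Finset MeasureTheory

lemma bval_mono : Monotone bval := by
  intro a b; cases a <;> cases b <;> simp [bval]

lemma rel_succ {n : ℕ} (φ : (Fin (n + 1) → Bool) → Bool) (p : Fin (n + 1) → ℝ) :
    rel φ p = p 0 * rel (fun x => φ (Fin.cons true x)) (Fin.tail p)
      + (1 - p 0) * rel (fun x => φ (Fin.cons false x)) (Fin.tail p) := by
  rw [rel, ← (Fin.consEquiv fun _ => Bool).sum_comp, Fintype.sum_prod_type, Fintype.sum_bool]
  simp only [rel, mul_sum, Fin.consEquiv, Equiv.coe_fn_mk, Fin.prod_univ_succ, Fin.cons_zero,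
    Fin.cons_succ, if_true, Bool.false_eq_true, if_false, Fin.tail]
  congr 1 <;> refine sum_congr rfl fun x _ => by ring

lemma rel_le_rel {n : ℕ} {φ ψ : (Fin n → Bool) → Bool} (hφψ : ∀ x y, x ≤ y → φ x ≤ ψ y)
    {p p' : Fin n → ℝ} (hp : 0 ≤ p) (hp' : p' ≤ 1) (hpp' : p ≤ p') :
    rel φ p ≤ rel ψ p' := by
  induction n with
  | zero =>
    simp only [rel, univ_unique, sum_singleton, univ_eq_empty, prod_empty, mul_one]
    exact bval_mono (hφψ _ _ le_rfl)
  | succ n ih =>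
    have htail := fun b b' (hb : b ≤ b') =>
      ih (φ := fun x => φ (Fin.cons b x)) (ψ := fun x => ψ (Fin.cons b' x))
        (fun x y hxy => hφψ _ _ (Fin.cons_le_cons.2 ⟨hb, hxy⟩))
        (p := Fin.tail p) (p' := Fin.tail p') (fun l => hp l.succ) (fun l => hp' l.succ)
        (fun l => hpp' l.succ)
    have h1 := htail true true le_rfl
    have h0 := htail false false le_rfl
    have h01 := htail false true (by decide)
    have h0p : 0 ≤ p 0 := hp 0
    have h1p' : p' 0 ≤ 1 := hp' 0
    have hpp'0 : p 0 ≤ p' 0 := hpp' 0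
    rw [rel_succ φ, rel_succ ψ]
    -- from the tail comparisons `X ≤ X'`, `Y ≤ X'`, `Y ≤ Y'`:
    -- `p X + (1 - p) Y ≤ p X' + (p' - p) Y + (1 - p') Y ≤ p' X' + (1 - p') Y'`
    linarith [mul_le_mul_of_nonneg_left h1 h0p, mul_le_mul_of_nonneg_left h01 (sub_nonneg.2 hpp'0),
      mul_le_mul_of_nonneg_left h0 (sub_nonneg.2 h1p')]

lemma rel_mono {n : ℕ} {φ : (Fin n → Bool) → Bool} (hφ : Monotone φ) {p p' : Fin n → ℝ}
    (hp : 0 ≤ p) (hp' : p' ≤ 1) (hpp' : p ≤ p') : rel φ p ≤ rel φ p' :=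
  rel_le_rel (fun _ _ hxy => hφ hxy) hp hp' hpp'

lemma rel_const_false {n : ℕ} (p : Fin n → ℝ) : rel (fun _ => false) p = 0 := by
  simp [rel, bval]

lemma rel_const_true {n : ℕ} (p : Fin n → ℝ) : rel (fun _ => true) p = 1 := by
  simp only [rel, bval, if_true, one_mul]
  rw [← Fintype.prod_sum fun j (b : Bool) => if b then p j else 1 - p j]
  simp

lemma rel_nonneg {n : ℕ} (φ : (Fin n → Bool) → Bool) {p : Fin n → ℝ} (hp₀ : 0 ≤ p)
    (hp₁ : p ≤ 1) : 0 ≤ rel φ p :=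
  rel_const_false p ▸ rel_le_rel (fun _ _ _ => Bool.false_le _) hp₀ hp₁ le_rfl

lemma rel_le_one {n : ℕ} (φ : (Fin n → Bool) → Bool) {p : Fin n → ℝ} (hp₀ : 0 ≤ p)
    (hp₁ : p ≤ 1) : rel φ p ≤ 1 :=
  rel_const_true p ▸ rel_le_rel (fun _ _ _ => Bool.le_true _) hp₀ hp₁ le_rfl

lemma IsLowerSet.measure_le_of_measure_Iic_le {μ ν : Measure ℝ}
    (h : ∀ t, μ (Set.Iic t) ≤ ν (Set.Iic t)) {S : Set ℝ} (hS : IsLowerSet S) : μ S ≤ ν S := by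
  -- a countable cofinal subset of `S`: its rational points together with its maximum, if any
  set T := S ∩ Set.range ((↑) : ℚ → ℝ) ∪ S ∩ upperBounds S
  have hT : T.Countable :=
    ((Set.countable_range _).mono Set.inter_subset_right).union
      (Set.Subsingleton.countable fun x hx y hy => le_antisymm (hy.2 hx.1) (hx.2 hy.1))
  have hS_eq : S = ⋃ x ∈ T, Set.Iic x := by
    refine subset_antisymm (fun y hy => ?_) (Set.iUnion₂_subset fun x hx _ hy => hS hy ?_)
    · by_cases hmax : y ∈ upperBounds S
      · exact Set.mem_biUnion (Or.inr ⟨hy, hmax⟩) Set.self_mem_Iic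
      · obtain ⟨y', hy', hyy'⟩ : ∃ y' ∈ S, y < y' := by
          simpa [upperBounds] using hmax
        obtain ⟨q, hyq, hqy'⟩ := exists_rat_btwn hyy'
        exact Set.mem_biUnion (Or.inl ⟨hS hqy'.le hy', q, rfl⟩) hyq.le
    · exact hx.elim (·.1) (·.1)
  have hdir : DirectedOn (fun a b => Set.Iic a ⊆ Set.Iic b) T := fun a ha b hb =>
    (le_total a b).elim (fun hab => ⟨b, hb, Set.Iic_subset_Iic.2 hab, subset_rfl⟩)
      (fun hba => ⟨a, ha, subset_rfl, Set.Iic_subset_Iic.2 hba⟩)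
  rw [hS_eq, measure_biUnion_eq_iSup hT hdir, measure_biUnion_eq_iSup hT hdir]
  exact iSup₂_mono fun x _ => h x

theorem Antitone.integral_le_of_measure_Iic_le {μ ν : Measure ℝ} {g : ℝ → ℝ} (hg : Antitone g)
    (hg0 : 0 ≤ g) (hgν : Integrable g ν) (h : ∀ t, μ (Set.Iic t) ≤ ν (Set.Iic t)) :
    ∫ t, g t ∂μ ≤ ∫ t, g t ∂ν := by
  have hlayer : ∀ m : Measure ℝ,
      ∫⁻ t, ENNReal.ofReal (g t) ∂m = ∫⁻ s in Set.Ioi 0, m {t | s < g t} := fun m =>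
    lintegral_eq_lintegral_meas_lt m (.of_forall hg0) hg.measurable.aemeasurable
  rw [integral_eq_lintegral_of_nonneg_ae (.of_forall hg0) hg.measurable.aestronglyMeasurable,
    integral_eq_lintegral_of_nonneg_ae (.of_forall hg0) hg.measurable.aestronglyMeasurable]
  refine ENNReal.toReal_mono hgν.lintegral_lt_top.ne ?_
  rw [hlayer μ, hlayer ν]
  exact lintegral_mono fun s =>
    IsLowerSet.measure_le_of_measure_Iic_le h fun _ _ hba ha => ha.trans_le (hg hba)

theorem series_component_importance_monotone_general {n : ℕ}
    (φ : (Fin n → Bool) → Bool)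
    (hmono : ∀ x y : Fin n → Bool, (∀ l, x l ≤ y l) → φ x ≤ φ y)
    (i : Fin n)
    -- data for monotonicity in `Q_j`, `j ≠ i`: `Q'` increases `Q` in the
    -- `j`-th coordinate only, the lifetime density `f` of `i` is fixed
    (Q Q' : Fin n → ℝ → ℝ) (j : Fin n) (f : ℝ → ℝ)
    (hQr : ∀ l t, Q l t ∈ Set.Icc (0:ℝ) 1) (hQ'r : ∀ l t, Q' l t ∈ Set.Icc (0:ℝ) 1)
    (hQle : ∀ t, Q j t ≤ Q' j t) (hQeq : ∀ l, l ≠ j → Q' l = Q l)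
    (hf : ∀ t, 0 ≤ f t)
    (hintQ : IntegrableOn
      (fun t => rel φ (Function.update (fun l => Q l t) i 1) * f t) (Set.Ioi (0:ℝ)))
    (hintQ' : IntegrableOn
      (fun t => rel φ (Function.update (fun l => Q' l t) i 1) * f t) (Set.Ioi (0:ℝ)))
    -- data for monotonicity in `F_i`: two lifetime distributions of `i`
    -- given as probability measures `μ, μ'` with `F(t) = μ(Iic t) ≤ μ'(Iic t)`,
    -- the component reliabilities `Q` being nonincreasing in time
    (μ μ' : Measure ℝ) (hμ' : IsProbabilityMeasure μ')
    (hF : ∀ t : ℝ, μ (Set.Iic t) ≤ μ' (Set.Iic t))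
    (hQanti : ∀ l, Antitone (Q l)) :
    (∫ t in Set.Ioi (0:ℝ), rel φ (Function.update (fun l => Q l t) i 1) * f t)
        ≤ ∫ t in Set.Ioi (0:ℝ), rel φ (Function.update (fun l => Q' l t) i 1) * f t
    ∧ (∫ t, rel φ (Function.update (fun l => Q l t) i 1) ∂μ)
        ≤ ∫ t, rel φ (Function.update (fun l => Q l t) i 1) ∂μ' := by
  have hφ : Monotone φ := fun x y hxy => hmono x y hxy
  have hunit : ∀ R : Fin n → ℝ → ℝ, (∀ l t, R l t ∈ Set.Icc (0:ℝ) 1) → ∀ t,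
      0 ≤ Function.update (fun l => R l t) i 1 ∧ Function.update (fun l => R l t) i 1 ≤ 1 :=
    fun R hR t => ⟨le_update_iff.2 ⟨zero_le_one, fun l _ => (hR l t).1⟩,
      update_le_iff.2 ⟨le_rfl, fun l _ => (hR l t).2⟩⟩
  have hQQ' : ∀ t l, Q l t ≤ Q' l t := fun t l =>
    (eq_or_ne l j).elim (fun h => h ▸ hQle t) (fun h => (congrFun (hQeq l h) t).ge)
  have hanti : Antitone fun t => rel φ (Function.update (fun l => Q l t) i 1) :=
    fun s t hst => rel_mono hφ (hunit Q hQr t).1 (hunit Q hQr s).2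
      (update_le_update_iff.2 ⟨le_rfl, fun l _ => hQanti l hst⟩)
  refine ⟨integral_mono hintQ hintQ' fun t => mul_le_mul_of_nonneg_right ?_ (hf t), ?_⟩
  · exact rel_mono hφ (hunit Q hQr t).1 (hunit Q' hQ'r t).2
      (update_le_update_iff.2 ⟨le_rfl, fun l _ => hQQ' t l⟩)
  · have hg0 : ∀ t, 0 ≤ rel φ (Function.update (fun l => Q l t) i 1) := fun t =>
      rel_nonneg φ (hunit Q hQr t).1 (hunit Q hQr t).2
    refine hanti.integral_le_of_measure_Iic_le hg0
      (Integrable.of_bound hanti.measurable.aestronglyMeasurable 1 (.of_forall fun t => ?_)) hF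
    rw [Real.norm_of_nonneg (hg0 t)]
    exact rel_le_one φ (hunit Q hQr t).1 (hunit Q hQr t).2

/-- If component `i` is in series with the rest of the system, then its
Barlow–Proschan importance `I_h(i) = ∫₀^∞ h(1_i, Q(t)) dF_i(t)` is
nondecreasing in each `Q_j` (`j ≠ i`) and in `F_i`. -/
theorem series_component_importance_monotone {n : ℕ}
    (φ : (Fin n → Bool) → Bool)
    (hmono : ∀ x y : Fin n → Bool, (∀ l, x l ≤ y l) → φ x ≤ φ y)
    (i : Fin n)
    (hseries : ∀ x : Fin n → Bool, φ (Function.update x i false) = false)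
    -- data for monotonicity in `Q_j`, `j ≠ i`: `Q'` increases `Q` in the
    -- `j`-th coordinate only, the lifetime density `f` of `i` is fixed
    (Q Q' : Fin n → ℝ → ℝ) (j : Fin n) (hji : j ≠ i) (f : ℝ → ℝ)
    (hQr : ∀ l t, Q l t ∈ Set.Icc (0:ℝ) 1) (hQ'r : ∀ l t, Q' l t ∈ Set.Icc (0:ℝ) 1)
    (hQle : ∀ t, Q j t ≤ Q' j t) (hQeq : ∀ l, l ≠ j → Q' l = Q l)
    (hf : ∀ t, 0 ≤ f t)
    (hintQ : IntegrableOn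
      (fun t => rel φ (Function.update (fun l => Q l t) i 1) * f t) (Set.Ioi (0:ℝ)))
    (hintQ' : IntegrableOn
      (fun t => rel φ (Function.update (fun l => Q' l t) i 1) * f t) (Set.Ioi (0:ℝ)))
    -- data for monotonicity in `F_i`: two lifetime distributions of `i`
    -- given as probability measures `μ, μ'` with `F(t) = μ(Iic t) ≤ μ'(Iic t)`,
    -- the component reliabilities `Q` being nonincreasing in time
    (μ μ' : Measure ℝ) (hμ : IsProbabilityMeasure μ) (hμ' : IsProbabilityMeasure μ')
    (hF : ∀ t : ℝ, μ (Set.Iic t) ≤ μ' (Set.Iic t))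
    (hQanti : ∀ l, Antitone (Q l)) :
    (∫ t in Set.Ioi (0:ℝ), rel φ (Function.update (fun l => Q l t) i 1) * f t)
        ≤ ∫ t in Set.Ioi (0:ℝ), rel φ (Function.update (fun l => Q' l t) i 1) * f t
    ∧ (∫ t, rel φ (Function.update (fun l => Q l t) i 1) ∂μ)
        ≤ ∫ t, rel φ (Function.update (fun l => Q l t) i 1) ∂μ' :=
  series_component_importance_monotone_general φ hmono i Q Q' j f hQr hQ'r hQle hQeq hf hintQ hintQ'
    μ μ' hμ' hF hQanti
end
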